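/- Let n ≥ 3. For every Z ∈ 𝕄(n) there exist nonzero vectors v₁, …, v_n ∈ ℂ^n, pairwise orthogonal with respect to the real inner product ⟪·,·⟫, such that for each k = 1, …, n the affine straight line {Z + t·v_k : t ∈ ℝ} is entirely contained in 𝕄(n). -/

import Mathlib

open Complex

noncomputable section

/-- The set of `n`-segments in `ℂ^n`. -/
def Lset (n : ℕ) : Set (Fin n → ℂ) :=
  {Z | (¬ ∃ b : ℂ, ∀ j, Z j = b) ∧ ∃ (a b : ℂ) (X : Fin n → ℝ), ∀ j, Z j = a * (X j) + b}

/-- `𝕄(n)` (with `n = m + 3`): the `n`-segments whose first vertex is `0`. -/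
def Mset (m : ℕ) : Set (Fin (m + 3) → ℂ) :=
  {Z | Z ∈ Lset (m + 3) ∧ Z 0 = 0}

/-- The standard real inner product `⟪Z, W⟫ = Σ_j Re(Z_j · conj(W_j))` on `ℂ^n ≅ ℝ^{2n}`. -/
def rinner {n : ℕ} (Z W : Fin n → ℂ) : ℝ :=
  ∑ j, (Z j * (starRingEnd ℂ) (W j)).re

lemma re_term (c d : ℂ) (x y : ℝ) :
    (c * x * (starRingEnd ℂ) (d * y)).re = (c * (starRingEnd ℂ) d).re * (x * y) := by
  simp [map_mul, Complex.mul_re, Complex.mul_im]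
  ring

lemma key_re (a : ℂ) : ((1 + I) * a * (starRingEnd ℂ) ((I - 1) * a)).re = 0 := by
  simp [map_mul, Complex.mul_re, Complex.mul_im]
  ring

lemma key_re' (a : ℂ) : ((I - 1) * a * (starRingEnd ℂ) ((1 + I) * a)).re = 0 := by
  simp [map_mul, Complex.mul_re, Complex.mul_im]
  ring

lemma aux1 (t : ℝ) : (1 : ℂ) + (t : ℂ) * (1 + I) ≠ 0 := by
  intro h
  rw [Complex.ext_iff] at h
  simp [Complex.add_re, Complex.add_im, Complex.mul_re, Complex.mul_im] at h
  obtain ⟨h1, h2⟩ := h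
  linarith

lemma aux2 (t : ℝ) : (1 : ℂ) + (t : ℂ) * (I - 1) ≠ 0 := by
  intro h
  rw [Complex.ext_iff] at h
  simp [Complex.add_re, Complex.add_im, Complex.mul_re, Complex.mul_im, Complex.sub_re,
    Complex.sub_im] at h
  obtain ⟨h1, h2⟩ := h
  linarith

theorem Mset_contains_n_orthogonal_lines (m : ℕ) (Z : Fin (m + 3) → ℂ)
    (hZ : Z ∈ Mset m) :
    ∃ v : Fin (m + 3) → (Fin (m + 3) → ℂ),
      (∀ k, v k ≠ 0) ∧
      (∀ k l, k ≠ l → rinner (v k) (v l) = 0) ∧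
      (∀ (k) (t : ℝ), (fun j => Z j + (t : ℂ) * v k j) ∈ Mset m) := by
  obtain ⟨⟨hnc, a, b, X0, hX0⟩, hZ0⟩ := hZ
  have hb : b = -(a * X0 0) := by
    have h := hX0 0
    rw [hZ0] at h
    linear_combination -h
  -- the real vector X with X 0 = 0 and Z = a • X
  set X : EuclideanSpace ℝ (Fin (m + 3)) := WithLp.toLp 2 (fun j => X0 j - X0 0) with hXdef
  have hZX : ∀ j, Z j = a * (X j : ℂ) := by
    intro j
    rw [hX0 j, hb, hXdef]
    push_cast
    ring
  have hX0' : X 0 = 0 := by simp [hXdef]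
  have ha : a ≠ 0 := by
    intro h
    exact hnc ⟨0, fun j => by rw [hZX j, h, zero_mul]⟩
  have hXne : X ≠ 0 := by
    intro h
    exact hnc ⟨0, fun j => by rw [hZX j, show X j = 0 from by simp [h]]; simp⟩
  obtain ⟨j₀, hj₀⟩ : ∃ j, X j ≠ 0 := by
    by_contra h
    push_neg at h
    exact hXne (PiLp.ext fun j => by simpa using h j)
  -- the orthogonal complement of span {e₀, X}
  set e0 : EuclideanSpace ℝ (Fin (m + 3)) := EuclideanSpace.single 0 1 with he0
  have hXe0 : j₀ ≠ 0 := by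
    intro h; rw [h] at hj₀; exact hj₀ hX0'
  have li : LinearIndependent ℝ ![e0, X] := by
    rw [LinearIndependent.pair_iff]
    intro s t hst
    have h1 : t * X j₀ = 0 := by
      simpa [he0, PiLp.add_apply, PiLp.smul_apply, EuclideanSpace.single_apply, hXe0]
        using congrArg (fun v => v j₀) hst
    have ht : t = 0 := by
      rcases mul_eq_zero.mp h1 with h | h
      · exact h
      · exact absurd h hj₀
    have hs : s = 0 := by
      simpa [he0, PiLp.add_apply, PiLp.smul_apply, EuclideanSpace.single_apply, hX0', ht]
        using congrArg (fun v => v 0) hst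
    exact ⟨hs, ht⟩
  set S : Submodule ℝ (EuclideanSpace ℝ (Fin (m + 3))) := Submodule.span ℝ {e0, X} with hS
  have hrange : Set.range ![e0, X] = {e0, X} := by
    ext z
    simp [Fin.exists_fin_two, or_comm]
  have hSrank : Module.finrank ℝ S = 2 := by
    rw [hS, ← hrange, finrank_span_eq_card li]
    simp
  have hKrank : Module.finrank ℝ (Sᗮ : Submodule ℝ (EuclideanSpace ℝ (Fin (m + 3)))) = m + 1 := by
    have h1 := S.finrank_add_finrank_orthogonal
    rw [hSrank, finrank_euclideanSpace_fin] at h1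
    omega
  let B : OrthonormalBasis (Fin (m + 1)) ℝ ↥Sᗮ :=
    (stdOrthonormalBasis ℝ ↥Sᗮ).reindex (finCongr hKrank)
  set Y : Fin (m + 1) → EuclideanSpace ℝ (Fin (m + 3)) := fun i => (B i : _) with hY
  have hYK : ∀ i, Y i ∈ Sᗮ := fun i => (B i).2
  have hYorth : ∀ u, u ∈ S → ∀ i, (inner ℝ u (Y i) : ℝ) = 0 := by
    intro u hu i
    exact (Submodule.mem_orthogonal S (Y i)).mp (hYK i) u hu
  have hY0 : ∀ i, Y i 0 = 0 := by
    intro i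
    have h := hYorth e0 (Submodule.subset_span (by simp)) i
    rwa [he0, EuclideanSpace.inner_single_left, map_one, one_mul] at h
  have hXY : ∀ i, ∑ j, X j * Y i j = 0 := by
    intro i
    have h := hYorth X (Submodule.subset_span (by simp)) i
    rw [PiLp.inner_apply] at h
    simpa [mul_comm] using h
  have hYY : ∀ i i', i ≠ i' → ∑ j, Y i j * Y i' j = 0 := by
    intro i i' hii
    have h : (inner ℝ (B i') (B i) : ℝ) = 0 := B.orthonormal.2 hii.symm
    rw [Submodule.coe_inner, PiLp.inner_apply] at h
    simpa using h
  have hYne : ∀ i, Y i ≠ 0 := by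
    intro i
    have := B.orthonormal.ne_zero i
    simpa [hY, Submodule.coe_eq_zero] using fun h => this (Subtype.ext h)
  -- the vectors
  set c : Fin (m + 3) → ℂ := fun k =>
    if k.val = 0 then (1 + I) * a else if k.val = 1 then (I - 1) * a else a with hc
  set x : Fin (m + 3) → Fin (m + 3) → ℝ := fun k =>
    if h : k.val ≤ 1 then (X : Fin (m + 3) → ℝ)
    else Y ⟨k.val - 2, by have := k.isLt; omega⟩ with hx
  have hIone : (1 : ℂ) + I ≠ 0 := by
    intro h; rw [Complex.ext_iff] at h; simp at h
  have hIone' : I - (1 : ℂ) ≠ 0 := by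
    intro h; rw [Complex.ext_iff] at h; simp at h
  have hcne : ∀ k, c k ≠ 0 := by
    intro k
    rw [hc]
    simp only
    split_ifs
    · exact mul_ne_zero hIone ha
    · exact mul_ne_zero hIone' ha
    · exact ha
  have hxne : ∀ k, ∃ j, x k j ≠ 0 := by
    intro k
    rw [hx]
    simp only
    split_ifs
    · exact ⟨j₀, hj₀⟩
    · obtain ⟨j, hj⟩ : ∃ j, Y ⟨k.val - 2, by have := k.isLt; omega⟩ j ≠ 0 := by
        by_contra h
        push_neg at h
        exact hYne _ (PiLp.ext fun j => by simpa using h j)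
      exact ⟨j, hj⟩
  have hx0 : ∀ k, x k 0 = 0 := by
    intro k
    rw [hx]
    simp only
    split_ifs
    · exact hX0'
    · exact hY0 _
  refine ⟨fun k j => c k * (x k j : ℂ), ?_, ?_, ?_⟩
  · -- nonzero
    intro k h
    obtain ⟨j, hj⟩ := hxne k
    have := congrFun h j
    simp only [Pi.zero_apply] at this
    exact mul_ne_zero (hcne k) (Complex.ofReal_ne_zero.mpr hj) this
  · -- orthogonality
    intro k l hkl
    have hr : rinner (fun j => c k * (x k j : ℂ)) (fun j => c l * (x l j : ℂ)) =
        (c k * (starRingEnd ℂ) (c l)).re * ∑ j, x k j * x l j := by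
      rw [rinner, Finset.mul_sum]
      exact Finset.sum_congr rfl fun j _ => re_term _ _ _ _
    rw [hr]
    have hklv : k.val ≠ l.val := fun h => hkl (Fin.ext h)
    by_cases hk1 : k.val ≤ 1 <;> by_cases hl1 : l.val ≤ 1
    · -- both small: coefficient is zero
      have : (k.val = 0 ∧ l.val = 1) ∨ (k.val = 1 ∧ l.val = 0) := by omega
      rcases this with ⟨hk, hl⟩ | ⟨hk, hl⟩
      · have h0 : c k = (1 + I) * a := by rw [hc]; simp [hk]
        have h1 : c l = (I - 1) * a := by rw [hc]; simp [hl]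
        rw [h0, h1, key_re a, zero_mul]
      · have h0 : c k = (I - 1) * a := by rw [hc]; simp [hk]
        have h1 : c l = (1 + I) * a := by rw [hc]; simp [hl]
        rw [h0, h1, key_re' a, zero_mul]
    · -- l large
      have hsum : ∑ j, x k j * x l j = 0 := by
        rw [hx]
        simp only
        rw [dif_pos hk1, dif_neg hl1]
        exact hXY _
      rw [hsum, mul_zero]
    · -- k large
      have hsum : ∑ j, x k j * x l j = 0 := by
        rw [hx]
        simp only
        rw [dif_neg hk1, dif_pos hl1]
        rw [show ∑ j, Y ⟨k.val - 2, by have := k.isLt; omega⟩ j * X j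
            = ∑ j, X j * Y ⟨k.val - 2, by have := k.isLt; omega⟩ j from
          Finset.sum_congr rfl fun j _ => mul_comm _ _]
        exact hXY _
      rw [hsum, mul_zero]
    · -- both large
      have hsum : ∑ j, x k j * x l j = 0 := by
        rw [hx]
        simp only
        rw [dif_neg hk1, dif_neg hl1]
        refine hYY _ _ ?_
        intro h
        have := congrArg Fin.val h
        simp only at this
        omega
      rw [hsum, mul_zero]
  · -- lines
    intro k t
    simp only [Mset, Lset, Set.mem_setOf_eq]
    by_cases hk1 : k.val ≤ 1
    · obtain ⟨d, hd, hdne⟩ : ∃ d : ℂ, c k = d * a ∧ (1 : ℂ) + (t : ℂ) * d ≠ 0 := by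
        by_cases hk0 : k.val = 0
        · exact ⟨1 + I, by rw [hc]; simp [hk0], aux1 t⟩
        · refine ⟨I - 1, ?_, aux2 t⟩
          rw [hc]
          simp [show k.val = 1 by omega]
      have hxk : x k = X := by rw [hx]; simp only; rw [dif_pos hk1]
      refine ⟨⟨?_, a * (1 + (t : ℂ) * d), 0, X, fun j => by rw [hZX j, hd, hxk]; ring⟩, ?_⟩
      · rintro ⟨b', hb'⟩
        have h0 := hb' 0
        rw [hZ0, hxk, hX0'] at h0
        have hb'0 : b' = 0 := by rw [← h0]; simp
        have hj := hb' j₀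
        rw [hZX j₀, hd, hxk, hb'0] at hj
        have hz : a * (1 + (t : ℂ) * d) * (X j₀ : ℂ) = 0 := by linear_combination hj
        rcases mul_eq_zero.mp hz with h | h
        · exact mul_ne_zero ha hdne h
        · exact hj₀ (Complex.ofReal_eq_zero.mp h)
      · rw [hZ0, hxk, hX0']; simp
    · set i : Fin (m + 1) := ⟨k.val - 2, by have := k.isLt; omega⟩ with hi
      have hxk : x k = Y i := by rw [hx]; simp only; rw [dif_neg hk1]
      have hck : c k = a := by
        rw [hc]; simp only
        rw [if_neg (by omega), if_neg (by omega)]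
      refine ⟨⟨?_, a, 0, fun j => X j + t * Y i j, fun j => by
        rw [hZX j, hck, hxk]; push_cast; ring⟩, ?_⟩
      · rintro ⟨b', hb'⟩
        have h0 := hb' 0
        rw [hZ0, hxk, hY0 i] at h0
        have hb'0 : b' = 0 := by rw [← h0]; simp
        have hall : ∀ j, X j + t * Y i j = 0 := by
          intro j
          have hj := hb' j
          rw [hZX j, hck, hxk, hb'0] at hj
          have hz : a * ((X j + t * Y i j : ℝ) : ℂ) = 0 := by push_cast; linear_combination hj
          exact Complex.ofReal_eq_zero.mp ((mul_eq_zero.mp hz).resolve_left ha)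
        have hsum : ∑ j, X j * X j = 0 := by
          have h1 : ∑ j, X j * (X j + t * Y i j) = 0 :=
            Finset.sum_eq_zero fun j _ => by rw [hall j]; ring
          have h2 : ∑ j, X j * (X j + t * Y i j)
              = (∑ j, X j * X j) + t * ∑ j, X j * Y i j := by
            rw [Finset.mul_sum, ← Finset.sum_add_distrib]
            exact Finset.sum_congr rfl fun j _ => by ring
          rw [h2, hXY i, mul_zero, add_zero] at h1
          exact h1
        have hsq : X j₀ * X j₀ = 0 :=
          (Finset.sum_eq_zero_iff_of_nonneg fun j _ => mul_self_nonneg (X j)).mp hsum j₀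
            (Finset.mem_univ _)
        exact hj₀ (mul_self_eq_zero.mp hsq)
      · rw [hZ0, hxk, hY0 i]; simp
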